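/- Let P be a distribution over X × {0,1}, h* a 0/1-optimal classifier, and suppose r > 0 satisfies P_X(Mar_r(h*)) ≤ ε. Then the r-robust loss of h* is at most the optimal r-robust risk plus ε, and any r-robust-optimal classifier has 0/1 loss at most the Bayes risk plus ε. -/
import Mathlib


open MeasureTheory Metric Set ENNReal

/-- The `r`-margin area of a classifier `h`. -/
def marginArea {X : Type*} [MetricSpace X] (r : ℝ) (h : X → Bool) : Set X :=
  {x | ∃ z, dist x z < r ∧ h z ≠ h x}

/-- Expected 0/1 loss of a classifier `h` under distribution `P`. -/
def zeroOneRisk {X : Type*} [MetricSpace X] [MeasurableSpace X]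
    (P : Measure (X × Bool)) (h : X → Bool) : ℝ≥0∞ :=
  P {p | h p.1 ≠ p.2}

/-- Expected `r`-robust loss of a classifier `h` under distribution `P`. -/
def robustRisk {X : Type*} [MetricSpace X] [MeasurableSpace X]
    (P : Measure (X × Bool)) (r : ℝ) (h : X → Bool) : ℝ≥0∞ :=
  P {p | ∃ z, dist p.1 z < r ∧ h z ≠ p.2}


lemma zeroOne_le_robust {X : Type*} [MetricSpace X] [MeasurableSpace X]
    (P : Measure (X × Bool)) {r : ℝ} (hr : 0 < r) (h : X → Bool) :
    zeroOneRisk P h ≤ robustRisk P r h := by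
  apply measure_mono
  intro p hp
  exact ⟨p.1, by simpa using hr, hp⟩

lemma robust_le_zeroOne_add {X : Type*} [MetricSpace X] [MeasurableSpace X]
    (P : Measure (X × Bool)) {r : ℝ} (h : X → Bool) :
    robustRisk P r h ≤ zeroOneRisk P h + P {p | p.1 ∈ marginArea r h} := by
  calc robustRisk P r h ≤ P ({p : X × Bool | h p.1 ≠ p.2} ∪ {p | p.1 ∈ marginArea r h}) := by
        apply measure_mono
        rintro ⟨x, y⟩ ⟨z, hdz, hz⟩
        by_cases hx : h x = y
        · exact Or.inr ⟨z, hdz, hx ▸ hz⟩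
        · exact Or.inl hx
    _ ≤ _ := measure_union_le _ _

/-- if a 0/1-optimal classifier `hstar` has margin mass at most `ε`,
then its robust risk is within `ε` of the optimal robust risk, and any
robust-optimal classifier has 0/1 risk within `ε` of the Bayes risk. -/
theorem choose_r {X : Type*} [MetricSpace X] [MeasurableSpace X]
    (P : Measure (X × Bool)) [IsProbabilityMeasure P] (hstar : X → Bool)
    {r : ℝ} (hr : 0 < r) (ε : ℝ≥0∞)
    (hopt : ∀ g : X → Bool, zeroOneRisk P hstar ≤ zeroOneRisk P g)
    (hmar : P {p | p.1 ∈ marginArea r hstar} ≤ ε)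
    (hRobAttained : ∃ g0 : X → Bool, ∀ g, robustRisk P r g0 ≤ robustRisk P r g) :
    robustRisk P r hstar ≤ (⨅ g : X → Bool, robustRisk P r g) + ε ∧
    ∀ g : X → Bool, (∀ g', robustRisk P r g ≤ robustRisk P r g') →
      zeroOneRisk P g ≤ (⨅ g' : X → Bool, zeroOneRisk P g') + ε := by
  have key : robustRisk P r hstar ≤ (⨅ g : X → Bool, robustRisk P r g) + ε := by
    calc robustRisk P r hstar ≤ zeroOneRisk P hstar + P {p | p.1 ∈ marginArea r hstar} :=
          robust_le_zeroOne_add P hstar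
      _ ≤ (⨅ g : X → Bool, robustRisk P r g) + ε := by
          apply add_le_add _ hmar
          exact le_iInf fun g => (hopt g).trans (zeroOne_le_robust P hr g)
  refine ⟨key, fun g hg => ?_⟩
  calc zeroOneRisk P g ≤ robustRisk P r g := zeroOne_le_robust P hr g
    _ ≤ robustRisk P r hstar := hg hstar
    _ ≤ zeroOneRisk P hstar + P {p | p.1 ∈ marginArea r hstar} := robust_le_zeroOne_add P hstar
    _ ≤ (⨅ g' : X → Bool, zeroOneRisk P g') + ε := add_le_add (le_iInf hopt) hmar
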